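/- arXiv:2411.09561 — 4 statements merged into one kernel-verified Lean document; each statement's English description precedes it below -/
import Mathlib

section
/- For every choice of the real parameters ζ₁₁, ζ₂₂, ζ₃₃, ζ₁₂, ζ₁₃, ζ₂₃, each component function x ↦ h⁺(x)ᵢⱼ (i,j ∈ {1,...,4}) is harmonic on ℝ⁴∖{0}: ∑_{l=1}^4 ∂_l²(h⁺_{ij})(x) = 0 for all x ≠ 0. -/
open scoped BigOperators

noncomputable section

/-- Partial derivative in the `i`-th coordinate direction. -/
def pd {n : ℕ} (i : Fin n) (f : (Fin n → ℝ) → ℝ) : (Fin n → ℝ) → ℝ :=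
  fun x => fderiv ℝ f x (Pi.single i 1)

/-- The complex structure `I₁` on `ℝ⁴`. -/
def I1 : Matrix (Fin 4) (Fin 4) ℝ :=
  !![0, -1, 0, 0; 1, 0, 0, 0; 0, 0, 0, -1; 0, 0, 1, 0]

/-- The complex structure `I₂` on `ℝ⁴`. -/
def I2 : Matrix (Fin 4) (Fin 4) ℝ :=
  !![0, 0, -1, 0; 0, 0, 0, 1; 1, 0, 0, 0; 0, -1, 0, 0]

/-- The complex structure `I₃ = I₁ I₂` on `ℝ⁴`. -/
def I3 : Matrix (Fin 4) (Fin 4) ℝ := I1 * I2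

/-- `α_J(x) = Jᵀ x`. -/
def alphaVec (J : Matrix (Fin 4) (Fin 4) ℝ) (x : Fin 4 → ℝ) : Fin 4 → ℝ :=
  Matrix.mulVec (Matrix.transpose J) x

/-- The outer product `A_{JK}(x) = α_J(x) · α_K(x)ᵀ`. -/
def Amat (J K : Matrix (Fin 4) (Fin 4) ℝ) (x : Fin 4 → ℝ) : Matrix (Fin 4) (Fin 4) ℝ :=
  Matrix.vecMulVec (alphaVec J x) (alphaVec K x)

/-- The leading term `h⁺` of the expansion of an ALE metric,
`h⁺(x) = −(2/(3 r⁶)) · [ζ₁₁(2A₁₁−A₂₂−A₃₃) + ζ₂₂(2A₂₂−A₁₁−A₃₃) + ζ₃₃(2A₃₃−A₁₁−A₂₂)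
          + ζ₁₂(A₁₂+A₂₁) + ζ₁₃(A₁₃+A₃₁) + ζ₂₃(A₂₃+A₃₂)]`. -/
def hplus (ζ11 ζ22 ζ33 ζ12 ζ13 ζ23 : ℝ) (x : Fin 4 → ℝ) : Matrix (Fin 4) (Fin 4) ℝ :=
  (-(2 / (3 * (∑ i, x i ^ 2) ^ 3))) •
    (ζ11 • ((2 : ℝ) • Amat I1 I1 x - Amat I2 I2 x - Amat I3 I3 x) +
     ζ22 • ((2 : ℝ) • Amat I2 I2 x - Amat I1 I1 x - Amat I3 I3 x) +
     ζ33 • ((2 : ℝ) • Amat I3 I3 x - Amat I1 I1 x - Amat I2 I2 x) +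
     ζ12 • (Amat I1 I2 x + Amat I2 I1 x) +
     ζ13 • (Amat I1 I3 x + Amat I3 I1 x) +
     ζ23 • (Amat I2 I3 x + Amat I3 I2 x))

/-!
Each component `h⁺ᵢⱼ` is `Q_N(x) · |x|⁻⁶`, where `Q_N` is the quadratic form of a coefficient
matrix `N` built from the rank-one matrices `vecMulVec (Jᵀ i) (Kᵀ j)`. The trace of `N` is the `(i, j)` entry
of the same combination of the products `Jᵀ K`, and this combination vanishes because the `I_J`
are orthogonal and `I_Jᵀ I_K + I_Kᵀ I_J = 0` for `J ≠ K`. On the other hand, in `ℝⁿ`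
`Δ(Q_M · |x|^{2k}) = 2 tr M · |x|^{2k} + 2k (n + 2k + 2) Q_M · |x|^{2k-2}`,
so a traceless quadratic form times `|x|^{-(n+2)}` is harmonic; for `n = 4` the exponent is `-6`.
-/

section PartialDerivatives

variable {n : ℕ} {f g : (Fin n → ℝ) → ℝ} {x : Fin n → ℝ} (l : Fin n)

lemma pd_const (c : ℝ) : pd l (fun _ => c) x = 0 := by
  simp [pd]

lemma pd_apply (a : Fin n) : pd l (fun y => y a) x = (Pi.single l 1 : Fin n → ℝ) a := by
  simp [pd, fderiv_apply]

lemma pd_add (hf : DifferentiableAt ℝ f x) (hg : DifferentiableAt ℝ g x) :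
    pd l (fun y => f y + g y) x = pd l f x + pd l g x := by
  simp [pd, fderiv_fun_add hf hg]

lemma pd_mul (hf : DifferentiableAt ℝ f x) (hg : DifferentiableAt ℝ g x) :
    pd l (fun y => f y * g y) x = pd l f x * g x + f x * pd l g x := by
  simp only [pd, fderiv_fun_mul hf hg, add_apply, smul_apply, smul_eq_mul]
  ring

lemma pd_const_mul (c : ℝ) (hf : DifferentiableAt ℝ f x) :
    pd l (fun y => c * f y) x = c * pd l f x := by
  simp [pd, fderiv_const_mul hf]

lemma pd_sum {ι : Type*} (s : Finset ι) {F : ι → (Fin n → ℝ) → ℝ}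
    (hF : ∀ i ∈ s, DifferentiableAt ℝ (F i) x) :
    pd l (fun y => ∑ i ∈ s, F i y) x = ∑ i ∈ s, pd l (F i) x := by
  simp [pd, fderiv_fun_sum hF]

lemma pd_zpow (k : ℤ) (hf : DifferentiableAt ℝ f x) (hx : f x ≠ 0) :
    pd l (fun y => f y ^ k) x = k * f x ^ (k - 1) * pd l f x := by
  have := ((hasDerivAt_zpow k (f x) (.inl hx)).comp_hasFDerivAt x hf.hasFDerivAt).fderiv
  simp only [pd, Function.comp_def] at this ⊢
  rw [this]
  simp [mul_assoc]

end PartialDerivatives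

open Matrix

def laplacian {n : ℕ} (f : (Fin n → ℝ) → ℝ) (x : Fin n → ℝ) : ℝ :=
  ∑ l, pd l (pd l f) x

section QuadraticForms

variable {n : ℕ}

def sqNorm (y : Fin n → ℝ) : ℝ := ∑ i, y i ^ 2

def quadForm (M : Matrix (Fin n) (Fin n) ℝ) (y : Fin n → ℝ) : ℝ :=
  ∑ a, ∑ b, M a b * y a * y b

@[simps]
def quadFormLinearMap (y : Fin n → ℝ) : Matrix (Fin n) (Fin n) ℝ →ₗ[ℝ] ℝ where
  toFun M := quadForm M y
  map_add' M N := by simp [quadForm, add_mul, Finset.sum_add_distrib]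
  map_smul' c M := by simp [quadForm, Finset.mul_sum, mul_assoc]

lemma sqNorm_ne_zero {x : Fin n → ℝ} (hx : x ≠ 0) : sqNorm x ≠ 0 := by
  simpa [sqNorm, dotProduct, sq] using dotProduct_self_eq_zero.not.mpr hx

lemma dotProduct_add_transpose_mulVec (M : Matrix (Fin n) (Fin n) ℝ) (x : Fin n → ℝ) :
    x ⬝ᵥ ((M + Mᵀ) *ᵥ x) = 2 * quadForm M x := by
  have hM : x ⬝ᵥ (M *ᵥ x) = quadForm M x := by
    simp [quadForm, dotProduct, mulVec, Finset.mul_sum, mul_comm, mul_left_comm]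
  rw [add_mulVec, dotProduct_add, mulVec_transpose, dotProduct_comm x (x ᵥ* M),
    ← dotProduct_mulVec, hM]
  ring

@[fun_prop]
lemma differentiable_sqNorm : Differentiable ℝ (sqNorm (n := n)) := by
  unfold sqNorm; fun_prop

@[fun_prop]
lemma differentiable_quadForm (M : Matrix (Fin n) (Fin n) ℝ) :
    Differentiable ℝ (quadForm M) := by
  unfold quadForm; fun_prop

@[fun_prop]
lemma differentiable_mulVec_apply (A : Matrix (Fin n) (Fin n) ℝ) (a : Fin n) :
    Differentiable ℝ (fun y : Fin n → ℝ => (A *ᵥ y) a) := by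
  simp only [mulVec, dotProduct]; fun_prop

lemma pd_sqNorm (l : Fin n) (x : Fin n → ℝ) : pd l sqNorm x = 2 * x l := by
  unfold sqNorm
  simp only [sq]
  rw [pd_sum _ _ (by fun_prop)]
  simp (disch := fun_prop) only [pd_mul, pd_apply, Pi.single_apply]
  simp [mul_ite, ite_mul, Finset.sum_add_distrib]
  ring

lemma pd_mulVec (A : Matrix (Fin n) (Fin n) ℝ) (a l : Fin n) (x : Fin n → ℝ) :
    pd l (fun y => (A *ᵥ y) a) x = A a l := by
  simp only [mulVec, dotProduct]
  rw [pd_sum _ _ (by fun_prop)]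
  simp (disch := fun_prop) [pd_const_mul, pd_apply, Pi.single_apply]

lemma pd_quadForm (M : Matrix (Fin n) (Fin n) ℝ) (l : Fin n) (x : Fin n → ℝ) :
    pd l (quadForm M) x = ((M + Mᵀ) *ᵥ x) l := by
  unfold quadForm
  rw [pd_sum _ _ (by fun_prop)]
  simp (disch := fun_prop) only [pd_sum, pd_mul, pd_const, pd_apply, Pi.single_apply]
  simp [mul_ite, ite_mul, Finset.sum_add_distrib, mulVec, dotProduct, add_mul]

lemma pd_quadForm_mul_sqNorm_zpow (M : Matrix (Fin n) (Fin n) ℝ) (k : ℤ) (l : Fin n)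
    {x : Fin n → ℝ} (hx : sqNorm x ≠ 0) :
    pd l (fun y => quadForm M y * sqNorm y ^ k) x =
      ((M + Mᵀ) *ᵥ x) l * sqNorm x ^ k + 2 * k * x l * quadForm M x * sqNorm x ^ (k - 1) := by
  rw [pd_mul _ (by fun_prop) (by fun_prop (disch := exact .inl hx)), pd_quadForm,
    pd_zpow _ _ (by fun_prop) hx, pd_sqNorm]
  ring

lemma pd_pd_quadForm_mul_sqNorm_zpow (M : Matrix (Fin n) (Fin n) ℝ) (k : ℤ) (l : Fin n)
    {x : Fin n → ℝ} (hx : sqNorm x ≠ 0) :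
    pd l (pd l (fun y => quadForm M y * sqNorm y ^ k)) x =
      2 * M l l * sqNorm x ^ k + 4 * k * x l * ((M + Mᵀ) *ᵥ x) l * sqNorm x ^ (k - 1)
        + 2 * k * quadForm M x * sqNorm x ^ (k - 1)
        + 4 * k * (k - 1) * x l ^ 2 * quadForm M x * sqNorm x ^ (k - 2) := by
  have hU : IsOpen {y : Fin n → ℝ | sqNorm y ≠ 0} :=
    isOpen_ne_fun differentiable_sqNorm.continuous continuous_const
  have hfirst : pd l (fun y => quadForm M y * sqNorm y ^ k) =ᶠ[nhds x] fun y =>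
      ((M + Mᵀ) *ᵥ y) l * sqNorm y ^ k + 2 * k * y l * quadForm M y * sqNorm y ^ (k - 1) :=
    Filter.eventually_of_mem (hU.mem_nhds hx) fun y hy => pd_quadForm_mul_sqNorm_zpow M k l hy
  rw [pd, hfirst.fderiv_eq, ← pd]
  have hpow : ∀ j : ℤ, DifferentiableAt ℝ (fun y => sqNorm y ^ j) x := fun j => by
    fun_prop (disch := exact .inl hx)
  simp (disch := first | fun_prop | exact hx) only [pd_add, pd_mul, pd_const, pd_mulVec,
    pd_apply, pd_quadForm, pd_sqNorm, pd_zpow, Pi.single_eq_same]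
  rw [show k - 1 - 1 = k - 2 by ring, Matrix.add_apply, transpose_apply]
  push_cast
  ring

theorem laplacian_quadForm_mul_sqNorm_zpow (M : Matrix (Fin n) (Fin n) ℝ) (k : ℤ)
    {x : Fin n → ℝ} (hx : sqNorm x ≠ 0) :
    laplacian (fun y => quadForm M y * sqNorm y ^ k) x =
      2 * trace M * sqNorm x ^ k
        + 2 * k * (n + 2 * k + 2) * quadForm M x * sqNorm x ^ (k - 1) := by
  have hs : sqNorm x ^ (k - 2) * sqNorm x = sqNorm x ^ (k - 1) := by
    rw [← zpow_add_one₀ hx]; ring_nf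
  have hEuler := dotProduct_add_transpose_mulVec M x
  simp only [laplacian, pd_pd_quadForm_mul_sqNorm_zpow M k _ hx, Finset.sum_add_distrib]
  have hdiag : ∑ l, 2 * M l l * sqNorm x ^ k = 2 * trace M * sqNorm x ^ k := by
    simp [trace, Finset.mul_sum, Finset.sum_mul]
  have hcross : ∑ l, 4 * k * x l * ((M + Mᵀ) *ᵥ x) l * sqNorm x ^ (k - 1) =
      4 * k * (x ⬝ᵥ ((M + Mᵀ) *ᵥ x)) * sqNorm x ^ (k - 1) := by
    simp only [dotProduct, Finset.mul_sum, Finset.sum_mul, mul_assoc]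
  have hradial : ∑ l, 4 * k * (k - 1) * x l ^ 2 * quadForm M x * sqNorm x ^ (k - 2) =
      4 * k * (k - 1) * sqNorm x * quadForm M x * sqNorm x ^ (k - 2) := by
    simp only [sqNorm, Finset.mul_sum, Finset.sum_mul, mul_assoc]
  rw [hdiag, hcross, hradial, hEuler, Finset.sum_const, Finset.card_univ, Fintype.card_fin,
    nsmul_eq_mul]
  linear_combination (4 * k * (k - 1) * quadForm M x) * hs

theorem laplacian_quadForm_mul_sqNorm_zpow_eq_zero {M : Matrix (Fin n) (Fin n) ℝ} {k : ℤ}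
    (hM : trace M = 0) (hk : (n : ℤ) + 2 * k + 2 = 0) {x : Fin n → ℝ} (hx : sqNorm x ≠ 0) :
    laplacian (fun y => quadForm M y * sqNorm y ^ k) x = 0 := by
  rw [laplacian_quadForm_mul_sqNorm_zpow M k hx, hM]
  have : (n : ℝ) + 2 * k + 2 = 0 := by exact_mod_cast hk
  rw [this]; ring

end QuadraticForms

lemma I1_transpose : I1ᵀ = -I1 := by
  ext a b; fin_cases a <;> fin_cases b <;> simp [I1]

lemma I2_transpose : I2ᵀ = -I2 := by
  ext a b; fin_cases a <;> fin_cases b <;> simp [I2]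

lemma I1_transpose_mul_self : I1ᵀ * I1 = 1 := by
  ext a b; fin_cases a <;> fin_cases b <;> simp [I1, mul_apply, Fin.sum_univ_four]

lemma I2_transpose_mul_self : I2ᵀ * I2 = 1 := by
  ext a b; fin_cases a <;> fin_cases b <;> simp [I2, mul_apply, Fin.sum_univ_four]

lemma I1_transpose_mul_I2_add_I2_transpose_mul_I1 : I1ᵀ * I2 + I2ᵀ * I1 = 0 := by
  ext a b; fin_cases a <;> fin_cases b <;> simp [I1, I2, mul_apply, Fin.sum_univ_four]

lemma I3_transpose_mul_self : I3ᵀ * I3 = 1 := by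
  rw [I3, transpose_mul, mul_assoc, ← mul_assoc I1ᵀ, I1_transpose_mul_self, one_mul,
    I2_transpose_mul_self]

lemma I1_transpose_mul_I3_add_I3_transpose_mul_I1 : I1ᵀ * I3 + I3ᵀ * I1 = 0 := by
  rw [I3, transpose_mul, ← mul_assoc, I1_transpose_mul_self, one_mul, mul_assoc,
    I1_transpose_mul_self, mul_one, I2_transpose, add_neg_cancel]

lemma I2_transpose_mul_I3_add_I3_transpose_mul_I2 : I2ᵀ * I3 + I3ᵀ * I2 = 0 := by
  rw [I3, transpose_mul, I1_transpose, I2_transpose]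
  noncomm_ring

section ZetaCombination

variable (ζ11 ζ22 ζ33 ζ12 ζ13 ζ23 : ℝ) {X Y : Type*} [AddCommGroup X] [Module ℝ X]
  [AddCommGroup Y] [Module ℝ Y]

-- Stated over an arbitrary module so that matrix entries, the trace and `quadForm`, all linear,
-- can be pushed through it.
def zetaCombination (A : Matrix (Fin 4) (Fin 4) ℝ → Matrix (Fin 4) (Fin 4) ℝ → X) : X :=
  ζ11 • ((2 : ℝ) • A I1 I1 - A I2 I2 - A I3 I3) +
  ζ22 • ((2 : ℝ) • A I2 I2 - A I1 I1 - A I3 I3) +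
  ζ33 • ((2 : ℝ) • A I3 I3 - A I1 I1 - A I2 I2) +
  ζ12 • (A I1 I2 + A I2 I1) +
  ζ13 • (A I1 I3 + A I3 I1) +
  ζ23 • (A I2 I3 + A I3 I2)

lemma hplus_eq_smul_zetaCombination (x : Fin 4 → ℝ) :
    hplus ζ11 ζ22 ζ33 ζ12 ζ13 ζ23 x =
      (-(2 / (3 * (∑ i, x i ^ 2) ^ 3))) • zetaCombination ζ11 ζ22 ζ33 ζ12 ζ13 ζ23 (Amat · · x) :=
  rfl

lemma LinearMap.map_zetaCombination (f : X →ₗ[ℝ] Y)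
    (A : Matrix (Fin 4) (Fin 4) ℝ → Matrix (Fin 4) (Fin 4) ℝ → X) :
    f (zetaCombination ζ11 ζ22 ζ33 ζ12 ζ13 ζ23 A) =
      zetaCombination ζ11 ζ22 ζ33 ζ12 ζ13 ζ23 (fun J K => f (A J K)) := by
  simp only [zetaCombination, map_add, map_sub, map_smul]

lemma zetaCombination_apply (A : Matrix (Fin 4) (Fin 4) ℝ → Matrix (Fin 4) (Fin 4) ℝ →
    Matrix (Fin 4) (Fin 4) ℝ) (i j : Fin 4) :
    zetaCombination ζ11 ζ22 ζ33 ζ12 ζ13 ζ23 A i j =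
      zetaCombination ζ11 ζ22 ζ33 ζ12 ζ13 ζ23 (fun J K => A J K i j) :=
  LinearMap.map_zetaCombination ζ11 ζ22 ζ33 ζ12 ζ13 ζ23 (entryLinearMap ℝ ℝ i j) A

lemma zetaCombination_transpose_mul :
    zetaCombination ζ11 ζ22 ζ33 ζ12 ζ13 ζ23 (fun J K => Jᵀ * K) = 0 := by
  simp only [zetaCombination, I1_transpose_mul_self, I2_transpose_mul_self, I3_transpose_mul_self,
    I1_transpose_mul_I2_add_I2_transpose_mul_I1, I1_transpose_mul_I3_add_I3_transpose_mul_I1,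
    I2_transpose_mul_I3_add_I3_transpose_mul_I2]
  module

end ZetaCombination

lemma Amat_apply_eq_quadForm (J K : Matrix (Fin 4) (Fin 4) ℝ) (y : Fin 4 → ℝ) (i j : Fin 4) :
    Amat J K y i j = quadForm (vecMulVec (Jᵀ i) (Kᵀ j)) y := by
  simp only [Amat, alphaVec, vecMulVec_apply, mulVec, dotProduct, quadForm, Finset.sum_mul_sum,
    transpose_apply]
  refine Finset.sum_congr rfl fun a _ => Finset.sum_congr rfl fun b _ => by ring

lemma trace_vecMulVec_transpose {m p q R : Type*} [Fintype m] [NonUnitalNonAssocSemiring R]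
    (J : Matrix m p R) (K : Matrix m q R) (i : p) (j : q) :
    trace (vecMulVec (Jᵀ i) (Kᵀ j)) = (Jᵀ * K) i j := by
  rw [trace_vecMulVec]; rfl

def hplusCoeff (ζ11 ζ22 ζ33 ζ12 ζ13 ζ23 : ℝ) (i j : Fin 4) : Matrix (Fin 4) (Fin 4) ℝ :=
  (-(2 / 3 : ℝ)) • zetaCombination ζ11 ζ22 ζ33 ζ12 ζ13 ζ23 (fun J K => vecMulVec (Jᵀ i) (Kᵀ j))

lemma hplus_apply_eq_quadForm_mul_zpow (ζ11 ζ22 ζ33 ζ12 ζ13 ζ23 : ℝ) (i j : Fin 4)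
    (y : Fin 4 → ℝ) :
    hplus ζ11 ζ22 ζ33 ζ12 ζ13 ζ23 y i j =
      quadForm (hplusCoeff ζ11 ζ22 ζ33 ζ12 ζ13 ζ23 i j) y * sqNorm y ^ (-3 : ℤ) := by
  have hcomb : zetaCombination ζ11 ζ22 ζ33 ζ12 ζ13 ζ23 (Amat · · y) i j =
      quadForm (zetaCombination ζ11 ζ22 ζ33 ζ12 ζ13 ζ23 fun J K => vecMulVec (Jᵀ i) (Kᵀ j)) y := by
    rw [zetaCombination_apply, ← quadFormLinearMap_apply, LinearMap.map_zetaCombination]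
    simp only [quadFormLinearMap_apply, Amat_apply_eq_quadForm]
  rw [hplus_eq_smul_zetaCombination, hplusCoeff, Matrix.smul_apply, hcomb,
    ← quadFormLinearMap_apply, ← quadFormLinearMap_apply, map_smul, _root_.zpow_neg, zpow_ofNat,
    sqNorm, smul_eq_mul, smul_eq_mul]
  field_simp

lemma trace_hplusCoeff (ζ11 ζ22 ζ33 ζ12 ζ13 ζ23 : ℝ) (i j : Fin 4) :
    trace (hplusCoeff ζ11 ζ22 ζ33 ζ12 ζ13 ζ23 i j) = 0 := by
  rw [hplusCoeff, trace_smul, ← traceLinearMap_apply (Fin 4) ℝ ℝ, LinearMap.map_zetaCombination]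
  simp only [traceLinearMap_apply, trace_vecMulVec_transpose]
  rw [← zetaCombination_apply, zetaCombination_transpose_mul, Matrix.zero_apply, smul_zero]

/-- Each component of `h⁺` is harmonic on `ℝ⁴ ∖ {0}`. -/
theorem hplus_harmonic (ζ11 ζ22 ζ33 ζ12 ζ13 ζ23 : ℝ) (i j : Fin 4)
    (x : Fin 4 → ℝ) (hx : x ≠ 0) :
    ∑ l, pd l (pd l (fun y => hplus ζ11 ζ22 ζ33 ζ12 ζ13 ζ23 y i j)) x = 0 := by
  simp only [hplus_apply_eq_quadForm_mul_zpow]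
  exact laplacian_quadForm_mul_sqNorm_zpow_eq_zero
    (trace_hplusCoeff ζ11 ζ22 ζ33 ζ12 ζ13 ζ23 i j) (by norm_num) (sqNorm_ne_zero hx)
end
end

section
/- The outward flux of the gradient of 1/|x|² through the boundary of the cube [−1,1]⁴ ⊂ ℝ⁴ equals −4π². Concretely, with f(x) = 1/((x¹)²+(x²)²+(x³)²+(x⁴)²), one has ∑_{j=1}^4 ∫_{[−1,1]³} [ (∂_j f)(x)|_{x^j=1} − (∂_j f)(x)|_{x^j=−1} ] dx̂ʲ = −4π², where for each j the integration is over the remaining three coordinates ranging over [−1,1]³. -/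
open scoped BigOperators
open MeasureTheory

noncomputable section

/-- `f(x) = 1/|x|²` on `ℝ⁴`. -/
def invNormSq (x : Fin 4 → ℝ) : ℝ := (∑ i, x i ^ 2)⁻¹

/-!
On the face `x^j = ±1` the normal derivative of `|x|⁻²` is `∓2 / (1 + |y|²)²`, so the flux is
`-16 ∫_{[-1,1]³} (1 + |y|²)⁻² dy`. Writing `(1 + |y|²)⁻² = 2 ∫₀^∞ t³ e^{-(1+|y|²)t²} dt` and
exchanging the integrals, the cube integral factors as `(∫_{-1}^1 e^{-t²s²} ds)³ = (2E(t)/t)³`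
with `E(t) = ∫₀^t e^{-s²} ds`, which leaves `16 ∫₀^∞ e^{-t²} E(t)³ dt = 4 E(∞)⁴ = π²/4`.
-/

open Real Set Filter Topology

theorem pd_inv_sum_sq {n : ℕ} (j : Fin n) {x : Fin n → ℝ} (hx : ∑ i, x i ^ 2 ≠ 0) :
    pd j (fun x => (∑ i, x i ^ 2)⁻¹) x = -(2 * x j) / (∑ i, x i ^ 2) ^ 2 := by
  have hcoord (i : Fin n) : HasFDerivAt (fun x : Fin n → ℝ => x i) (ContinuousLinearMap.proj i) x :=
    hasFDerivAt_apply (𝕜 := ℝ) i x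
  have hsum : HasFDerivAt (fun x : Fin n → ℝ => ∑ i, x i ^ 2) _ x :=
    HasFDerivAt.fun_sum fun i _ => (hcoord i).pow 2
  have hinv : HasFDerivAt (fun x : Fin n → ℝ => (∑ i, x i ^ 2)⁻¹) _ x :=
    (hasDerivAt_inv hx).comp_hasFDerivAt x hsum
  rw [pd, hinv.fderiv]
  simp only [Nat.add_one_sub_one, pow_one, nsmul_eq_mul, Nat.cast_ofNat, neg_smul,
    neg_apply, smul_apply, sum_apply,
    ContinuousLinearMap.proj_apply, Pi.single_apply, smul_eq_mul, mul_ite, mul_one, mul_zero,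
    Finset.sum_ite_eq', Finset.mem_univ, ite_true]
  ring

theorem sum_insertNth_sq {n : ℕ} (j : Fin (n + 1)) (a : ℝ) (y : Fin n → ℝ) :
    ∑ i, j.insertNth a y i ^ 2 = a ^ 2 + ∑ i, y i ^ 2 := by
  simp [Fin.sum_univ_succAbove _ j]

theorem pd_inv_sum_sq_insertNth {n : ℕ} (j : Fin (n + 1)) {a : ℝ} (ha : a ≠ 0) (y : Fin n → ℝ) :
    pd j (fun x => (∑ i, x i ^ 2)⁻¹) (j.insertNth a y) =
      -(2 * a) / (a ^ 2 + ∑ i, y i ^ 2) ^ 2 := by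
  have hpos : 0 < a ^ 2 + ∑ i, y i ^ 2 := by positivity
  rw [pd_inv_sum_sq j (by rw [sum_insertNth_sq]; exact hpos.ne'), sum_insertNth_sq,
    Fin.insertNth_apply_same]

theorem pd_inv_sum_sq_insertNth_one_sub_neg_one {n : ℕ} (j : Fin (n + 1)) (y : Fin n → ℝ) :
    pd j (fun x => (∑ i, x i ^ 2)⁻¹) (j.insertNth 1 y) -
        pd j (fun x => (∑ i, x i ^ 2)⁻¹) (j.insertNth (-1) y) =
      -4 * ((1 + ∑ i, y i ^ 2) ^ 2)⁻¹ := by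
  rw [pd_inv_sum_sq_insertNth j one_ne_zero, pd_inv_sum_sq_insertNth j (by norm_num)]
  ring

theorem integral_Ioi_pow_three_mul_exp_neg_mul_sq {c : ℝ} (hc : 0 < c) :
    ∫ t in Ioi (0 : ℝ), t ^ 3 * exp (-(c * t ^ 2)) = (c ^ 2)⁻¹ / 2 := by
  have h := integral_rpow_mul_exp_neg_mul_rpow (p := 2) (q := 3) two_pos (by norm_num) hc
  norm_num [Real.Gamma_two] at h
  rw [h]
  ring

theorem integrableOn_Ioi_pow_three_mul_exp_neg_mul_sq {c : ℝ} (hc : 0 < c) :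
    IntegrableOn (fun t : ℝ => t ^ 3 * exp (-(c * t ^ 2))) (Ioi 0) := by
  simpa using integrableOn_rpow_mul_exp_neg_mul_rpow (p := 2) (s := 3) (by norm_num) two_pos hc

theorem intervalIntegral.integral_neg_self_of_even {f : ℝ → ℝ} (hf : Continuous f)
    (heven : ∀ x, f (-x) = f x) (a : ℝ) :
    ∫ x in -a..a, f x = 2 * ∫ x in 0..a, f x := by
  rw [← intervalIntegral.integral_add_adjacent_intervals (b := 0) (hf.intervalIntegrable _ _)
    (hf.intervalIntegrable _ _), ← neg_zero, ← intervalIntegral.integral_comp_neg]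
  simp only [heven, neg_zero]
  ring

def gaussPrimitive (t : ℝ) : ℝ := ∫ s in (0 : ℝ)..t, exp (-s ^ 2)

theorem continuous_exp_neg_sq : Continuous fun s : ℝ => exp (-s ^ 2) := by fun_prop

theorem hasDerivAt_gaussPrimitive (t : ℝ) : HasDerivAt gaussPrimitive (exp (-t ^ 2)) t :=
  (continuous_exp_neg_sq.integral_hasStrictDerivAt 0 t).hasDerivAt

theorem gaussPrimitive_nonneg {t : ℝ} (ht : 0 ≤ t) : 0 ≤ gaussPrimitive t :=
  intervalIntegral.integral_nonneg ht fun _ _ => (exp_pos _).le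

theorem tendsto_gaussPrimitive_atTop : Tendsto gaussPrimitive atTop (𝓝 (√π / 2)) := by
  have h := intervalIntegral_tendsto_integral_Ioi 0
    ((integrable_exp_neg_mul_sq one_pos).integrableOn (s := Ioi 0)) tendsto_id
  have hval := integral_gaussian_Ioi 1
  simp only [neg_mul, one_mul, div_one] at h hval
  rwa [hval] at h

theorem integral_exp_neg_mul_sq_mul_sq {t : ℝ} (ht : 0 < t) :
    ∫ s in (-1 : ℝ)..1, exp (-(t ^ 2 * s ^ 2)) = 2 * gaussPrimitive t / t := by
  simp_rw [← mul_pow]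
  rw [intervalIntegral.integral_comp_mul_left (fun u => exp (-u ^ 2)) ht.ne', mul_neg_one,
    mul_one, intervalIntegral.integral_neg_self_of_even continuous_exp_neg_sq (by simp),
    smul_eq_mul, gaussPrimitive]
  field_simp

theorem integral_Ioi_exp_neg_sq_mul_gaussPrimitive_pow_three :
    ∫ t in Ioi (0 : ℝ), exp (-t ^ 2) * gaussPrimitive t ^ 3 = π ^ 2 / 64 := by
  have hderiv (t : ℝ) : HasDerivAt (fun t => gaussPrimitive t ^ 4 / 4)
      (exp (-t ^ 2) * gaussPrimitive t ^ 3) t := by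
    refine (((hasDerivAt_gaussPrimitive t).fun_pow 4).div_const 4).congr_deriv ?_
    norm_num
    ring
  have hlim : Tendsto (fun t => gaussPrimitive t ^ 4 / 4) atTop (𝓝 (π ^ 2 / 64)) := by
    convert (tendsto_gaussPrimitive_atTop.pow 4).div_const 4 using 2
    rw [div_pow, show √π ^ 4 = (√π ^ 2) ^ 2 by ring, sq_sqrt pi_pos.le]
    ring
  have hnonneg (t : ℝ) (ht : t ∈ Ioi 0) : 0 ≤ exp (-t ^ 2) * gaussPrimitive t ^ 3 := by
    have := gaussPrimitive_nonneg (le_of_lt ht)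
    positivity
  rw [integral_Ioi_of_hasDerivAt_of_nonneg (hderiv 0).continuousAt.continuousWithinAt
    (fun t _ => hderiv t) hnonneg hlim]
  simp [gaussPrimitive]

theorem setIntegral_Icc_pi_prod_eq_pow {ι : Type*} [Fintype ι] (g : ℝ → ℝ) (a b : ℝ) :
    ∫ y in Icc (fun _ : ι => a) (fun _ => b), ∏ i, g (y i) =
      (∫ s in Icc a b, g s) ^ Fintype.card ι := by
  rw [← pi_univ_Icc, volume_pi, Measure.restrict_pi_pi, integral_fintype_prod_eq_pow]

abbrev cube (n : ℕ) : Set (Fin n → ℝ) := Icc (fun _ => -1) (fun _ => 1)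

theorem integral_cube_exp_neg_mul_sum_sq (n : ℕ) (c : ℝ) :
    ∫ y in cube n, exp (-(c * ∑ i, y i ^ 2)) = (∫ s in (-1 : ℝ)..1, exp (-(c * s ^ 2))) ^ n := by
  simp_rw [Finset.mul_sum, ← Finset.sum_neg_distrib, exp_sum]
  rw [setIntegral_Icc_pi_prod_eq_pow (fun s => exp (-(c * s ^ 2))), Fintype.card_fin,
    integral_Icc_eq_integral_Ioc, ← intervalIntegral.integral_of_le (by norm_num)]

theorem integrable_cube_prod_Ioi (n : ℕ) :
    Integrable (fun p : (Fin n → ℝ) × ℝ => p.2 ^ 3 * exp (-((1 + ∑ i, p.1 i ^ 2) * p.2 ^ 2)))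
      ((volume.restrict (cube n)).prod (volume.restrict (Ioi 0))) := by
  have hpos (y : Fin n → ℝ) : 0 < 1 + ∑ i, y i ^ 2 := by positivity
  refine (integrable_prod_iff (by fun_prop)).2
    ⟨.of_forall fun y => integrableOn_Ioi_pow_three_mul_exp_neg_mul_sq (hpos y), ?_⟩
  have hnorm (y : Fin n → ℝ) : ∫ t in Ioi 0, ‖t ^ 3 * exp (-((1 + ∑ i, y i ^ 2) * t ^ 2))‖ =
      ((1 + ∑ i, y i ^ 2) ^ 2)⁻¹ / 2 := by
    rw [← integral_Ioi_pow_three_mul_exp_neg_mul_sq (hpos y)]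
    refine setIntegral_congr_fun measurableSet_Ioi fun t (ht : 0 < t) => ?_
    rw [Real.norm_of_nonneg (by positivity)]
  simp_rw [hnorm]
  have hcont : Continuous fun y : Fin n → ℝ => ((1 + ∑ i, y i ^ 2) ^ 2)⁻¹ / 2 :=
    ((Continuous.inv₀ (by fun_prop)) fun y => by positivity).div_const 2
  exact hcont.continuousOn.integrableOn_compact isCompact_Icc

theorem integral_cube_inv_one_add_sum_sq_sq (n : ℕ) :
    ∫ y in cube n, ((1 + ∑ i, y i ^ 2) ^ 2)⁻¹ =
      2 * ∫ t in Ioi (0 : ℝ), t ^ 3 * exp (-t ^ 2) * (2 * gaussPrimitive t / t) ^ n := by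
  calc ∫ y in cube n, ((1 + ∑ i, y i ^ 2) ^ 2)⁻¹
      = 2 * ∫ y in cube n, ∫ t in Ioi 0, t ^ 3 * exp (-((1 + ∑ i, y i ^ 2) * t ^ 2)) := by
        rw [← integral_const_mul]
        refine setIntegral_congr_fun measurableSet_Icc fun y _ => ?_
        rw [integral_Ioi_pow_three_mul_exp_neg_mul_sq (by positivity)]
        ring
    _ = 2 * ∫ t in Ioi 0, ∫ y in cube n, t ^ 3 * exp (-((1 + ∑ i, y i ^ 2) * t ^ 2)) := by
        rw [integral_integral_swap (integrable_cube_prod_Ioi n)]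
    _ = 2 * ∫ t in Ioi (0 : ℝ), t ^ 3 * exp (-t ^ 2) * (2 * gaussPrimitive t / t) ^ n := by
        congr 1
        refine setIntegral_congr_fun measurableSet_Ioi fun t (ht : 0 < t) => ?_
        simp_rw [add_mul, one_mul, neg_add, exp_add, ← mul_assoc, mul_comm (∑ i, _) (t ^ 2)]
        rw [integral_const_mul, integral_cube_exp_neg_mul_sum_sq,
          integral_exp_neg_mul_sq_mul_sq ht]

theorem integral_cube_three_inv_one_add_sum_sq_sq :
    ∫ y in cube 3, ((1 + ∑ i, y i ^ 2) ^ 2)⁻¹ = π ^ 2 / 4 := by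
  have hsimp : ∫ t in Ioi (0 : ℝ), t ^ 3 * exp (-t ^ 2) * (2 * gaussPrimitive t / t) ^ 3 =
      ∫ t in Ioi (0 : ℝ), 8 * (exp (-t ^ 2) * gaussPrimitive t ^ 3) := by
    refine setIntegral_congr_fun measurableSet_Ioi fun t (ht : 0 < t) => ?_
    field_simp
    ring
  rw [integral_cube_inv_one_add_sum_sq_sq, hsimp, integral_const_mul,
    integral_Ioi_exp_neg_sq_mul_gaussPrimitive_pow_three]
  ring

/-- The outward flux of `∇(1/|x|²)` through the boundary of the cube `[−1,1]⁴ ⊂ ℝ⁴`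
equals `−4π²`. -/
theorem flux_grad_inv_normSq_cube :
    ∑ j : Fin 4,
      (∫ y in Set.Icc (fun _ : Fin 3 => (-1 : ℝ)) (fun _ => 1),
        (pd j invNormSq (j.insertNth 1 y) - pd j invNormSq (j.insertNth (-1) y)))
      = -4 * Real.pi ^ 2 := by
  have hface (j : Fin 4) (y : Fin 3 → ℝ) :
      pd j invNormSq (j.insertNth 1 y) - pd j invNormSq (j.insertNth (-1) y) =
        -4 * ((1 + ∑ i, y i ^ 2) ^ 2)⁻¹ :=
    pd_inv_sum_sq_insertNth_one_sub_neg_one j y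
  simp_rw [hface, integral_const_mul, integral_cube_three_inv_one_add_sum_sq_sq]
  rw [Finset.sum_const, Finset.card_univ, Fintype.card_fin]
  ring
end
end

section
/- With σ₁ and σ₄ the explicit integrals defined below, one has 8·(3σ₁ + σ₄) = π²; equivalently, ∫_{[−1,1]³} (1 + 3y₁⁴)/(1+|y|²)⁴ dy = π²/8. -/
open scoped BigOperators
open MeasureTheory

noncomputable section

/-- `σ₁ = ∫_{[−1,1]³} y₁⁴/(1+|y|²)⁴ dy`. -/
def sigma1 : ℝ :=
  ∫ y in Set.Icc (fun _ : Fin 3 => (-1 : ℝ)) (fun _ => 1),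
    (y 0) ^ 4 / (1 + ∑ i, (y i) ^ 2) ^ 4

/-- `σ₂ = ∫_{[−1,1]³} y₁²y₂²/(1+|y|²)⁴ dy`. -/
def sigma2 : ℝ :=
  ∫ y in Set.Icc (fun _ : Fin 3 => (-1 : ℝ)) (fun _ => 1),
    (y 0) ^ 2 * (y 1) ^ 2 / (1 + ∑ i, (y i) ^ 2) ^ 4

/-- `σ₃ = ∫_{[−1,1]³} y₁²/(1+|y|²)⁴ dy`. -/
def sigma3 : ℝ :=
  ∫ y in Set.Icc (fun _ : Fin 3 => (-1 : ℝ)) (fun _ => 1),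
    (y 0) ^ 2 / (1 + ∑ i, (y i) ^ 2) ^ 4

/-- `σ₄ = ∫_{[−1,1]³} 1/(1+|y|²)⁴ dy`. -/
def sigma4 : ℝ :=
  ∫ y in Set.Icc (fun _ : Fin 3 => (-1 : ℝ)) (fun _ => 1),
    1 / (1 + ∑ i, (y i) ^ 2) ^ 4

/-!
Writing `1 / (1 + |y|²)⁴ = (1/3) ∫₀^∞ u⁷ e^{-(1 + |y|²) u²} du` and exchanging the integrals, the
integral over the cube factorises into truncated Gaussian moments `E_k(u) = ∫₀^u s^k e^{-s²} ds`,
leaving `∫₀^∞ (8/3 u⁴ E₀³ + 8 E₄ E₀²) e^{-u²} du`. Since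
`E₄ = 3/4 E₀ - (u³/2 + 3u/4) e^{-u²}`, this integrand is the derivative of
`2 E₀⁴ - (4/3 u³ + 2u) e^{-u²} E₀³`, which vanishes at `0` and tends to `2 (√π/2)⁴ = π²/8`.
-/

open Real Set Filter Topology
open scoped Nat

def partialGaussMoment (k : ℕ) (u : ℝ) : ℝ := ∫ s in (0 : ℝ)..u, s ^ k * exp (-s ^ 2)

theorem hasDerivAt_partialGaussMoment (k : ℕ) (u : ℝ) :
    HasDerivAt (partialGaussMoment k) (u ^ k * exp (-u ^ 2)) u :=
  (Continuous.integral_hasStrictDerivAt (by fun_prop) 0 u).hasDerivAt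

@[simp] theorem partialGaussMoment_zero_right (k : ℕ) : partialGaussMoment k 0 = 0 :=
  intervalIntegral.integral_same

theorem partialGaussMoment_nonneg {k : ℕ} (hk : Even k) {u : ℝ} (hu : 0 ≤ u) :
    0 ≤ partialGaussMoment k u :=
  intervalIntegral.integral_nonneg hu fun s _ => by have := hk.pow_nonneg s; positivity

theorem tendsto_partialGaussMoment_zero : Tendsto (partialGaussMoment 0) atTop (𝓝 (√π / 2)) := by
  have hint : IntegrableOn (fun s : ℝ => s ^ 0 * exp (-s ^ 2)) (Ioi 0) := by
    simpa using integrableOn_rpow_mul_exp_neg_mul_sq (b := 1) one_pos (s := 0) (by norm_num)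
  have hval : ∫ s in Ioi (0 : ℝ), s ^ 0 * exp (-s ^ 2) = √π / 2 := by
    simpa using integral_gaussian_Ioi 1
  exact hval ▸ intervalIntegral_tendsto_integral_Ioi 0 hint tendsto_id

theorem partialGaussMoment_four (u : ℝ) :
    partialGaussMoment 4 u =
      3 / 4 * partialGaussMoment 0 u - (u ^ 3 / 2 + 3 * u / 4) * exp (-u ^ 2) := by
  have hderiv : ∀ x : ℝ, HasDerivAt
      (fun s => 3 / 4 * partialGaussMoment 0 s - (s ^ 3 / 2 + 3 * s / 4) * exp (-s ^ 2))
      (x ^ 4 * exp (-x ^ 2)) x := by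
    intro x
    have hexp : HasDerivAt (fun s : ℝ => exp (-s ^ 2)) (exp (-x ^ 2) * -(2 * x)) x := by
      simpa using ((hasDerivAt_pow 2 x).neg).exp
    have hpoly : HasDerivAt (fun s : ℝ => s ^ 3 / 2 + 3 * s / 4) (3 * x ^ 2 / 2 + 3 / 4) x :=
      (((hasDerivAt_pow 3 x).div_const 2).fun_add
        (((hasDerivAt_id x).const_mul 3).div_const 4)).congr_deriv (by norm_num)
    exact (((hasDerivAt_partialGaussMoment 0 x).const_mul (3 / 4)).fun_sub
      (hpoly.fun_mul hexp)).congr_deriv (by ring)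
  rw [partialGaussMoment, intervalIntegral.integral_eq_sub_of_hasDerivAt (fun x _ => hderiv x)
    (Continuous.intervalIntegrable (by fun_prop) _ _)]
  simp

theorem intervalIntegral_neg_eq_two_mul_of_even {f : ℝ → ℝ} (hf : ∀ x, f (-x) = f x)
    (hcont : Continuous f) (u : ℝ) :
    ∫ x in (-u)..u, f x = 2 * ∫ x in (0 : ℝ)..u, f x := by
  have hleft : ∫ x in (-u)..0, f x = ∫ x in (0 : ℝ)..u, f x := by
    simpa [hf] using (intervalIntegral.integral_comp_neg (a := 0) (b := u) f).symm
  rw [← intervalIntegral.integral_add_adjacent_intervals (b := 0)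
    (hcont.intervalIntegrable _ _) (hcont.intervalIntegrable _ _), hleft]
  ring

theorem integral_Icc_pow_mul_exp_neg_mul_sq {k : ℕ} (hk : Even k) {u : ℝ} (hu : 0 < u) :
    ∫ x in Icc (-1 : ℝ) 1, x ^ k * exp (-(u ^ 2 * x ^ 2)) =
      2 * partialGaussMoment k u / u ^ (k + 1) := by
  have hscale : ∀ x : ℝ, x ^ k * exp (-(u ^ 2 * x ^ 2)) =
      (u ^ k)⁻¹ * ((fun s => s ^ k * exp (-s ^ 2)) (u * x)) := by
    intro x
    field_simp
    ring_nf
  rw [integral_Icc_eq_integral_Ioc, ← intervalIntegral.integral_of_le (by norm_num)]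
  simp_rw [hscale]
  rw [intervalIntegral.integral_const_mul,
    intervalIntegral.integral_comp_mul_left (fun s => s ^ k * exp (-s ^ 2)) hu.ne',
    mul_neg_one, mul_one, intervalIntegral_neg_eq_two_mul_of_even (fun x => by simp [hk.neg_pow])
      (by fun_prop), smul_eq_mul, ← partialGaussMoment]
  field_simp
  ring

theorem integral_Ioi_pow_mul_exp_neg_mul_sq (n : ℕ) {c : ℝ} (hc : 0 < c) :
    ∫ u in Ioi (0 : ℝ), u ^ (2 * n + 1) * exp (-(c * u ^ 2)) = n ! / (2 * c ^ (n + 1)) := by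
  have h := integral_rpow_mul_exp_neg_mul_rpow two_pos
    (neg_one_lt_zero.trans_le (Nat.cast_nonneg (2 * n + 1))) hc
  have hexp : ((-(((2 * n + 1 : ℕ) : ℝ) + 1) / 2)) = -((n + 1 : ℕ) : ℝ) := by push_cast; ring
  have hgam : (((2 * n + 1 : ℕ) : ℝ) + 1) / 2 = (n : ℝ) + 1 := by push_cast; ring
  simp only [rpow_natCast, rpow_two, hexp, hgam, Gamma_nat_eq_factorial, rpow_neg hc.le,
    neg_mul] at h
  rw [h]
  field_simp

theorem setIntegral_Icc_prod_eq_prod {ι : Type*} [Fintype ι] (a b : ι → ℝ) (f : ι → ℝ → ℝ) :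
    ∫ y in Icc a b, ∏ i, f i (y i) = ∏ i, ∫ x in Icc (a i) (b i), f i x := by
  rw [← pi_univ_Icc, volume_pi, Measure.restrict_pi_pi, integral_fintype_prod_eq_prod]

theorem integrableOn_Ioi_pow_mul_exp_neg_mul_sq (n : ℕ) {c : ℝ} (hc : 0 < c) :
    IntegrableOn (fun u : ℝ => u ^ (2 * n + 1) * exp (-(c * u ^ 2))) (Ioi 0) :=
  Integrable.of_integral_ne_zero <| by
    rw [integral_Ioi_pow_mul_exp_neg_mul_sq n hc]; positivity

theorem setIntegral_div_one_add_pow_eq {E : Type*} [TopologicalSpace E] [MeasurableSpace E]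
    [BorelSpace E] [T2Space E] [SecondCountableTopology E] {μ : Measure E}
    [IsFiniteMeasureOnCompacts μ]
    {K : Set E} (hK : IsCompact K) {w q : E → ℝ} (hw : Continuous w) (hq : Continuous q)
    (hq0 : ∀ y, 0 ≤ q y) (n : ℕ) :
    ∫ y in K, w y / (1 + q y) ^ (n + 1) ∂μ =
      2 / n ! * ∫ u in Ioi (0 : ℝ),
        u ^ (2 * n + 1) * exp (-u ^ 2) * ∫ y in K, w y * exp (-(u ^ 2 * q y)) ∂μ := by
  have : IsFiniteMeasure (μ.restrict K) := isFiniteMeasure_restrict.2 hK.measure_lt_top.ne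
  set F : E → ℝ → ℝ := fun y u => w y * (u ^ (2 * n + 1) * exp (-((1 + q y) * u ^ 2)))
  have hpos : ∀ y, 0 < 1 + q y := fun y => by linarith [hq0 y]
  have hslice : ∀ y, ∫ u in Ioi (0 : ℝ), F y u = w y * (n ! / (2 * (1 + q y) ^ (n + 1))) := by
    intro y
    rw [integral_const_mul, integral_Ioi_pow_mul_exp_neg_mul_sq n (hpos y)]
  have hF : Integrable (Function.uncurry F) ((μ.restrict K).prod (volume.restrict (Ioi 0))) := by
    rw [integrable_prod_iff (by simp only [F]; fun_prop)]
    refine ⟨ae_of_all _ fun y => ((integrableOn_Ioi_pow_mul_exp_neg_mul_sq n (hpos y)).const_mul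
      (w y)), ?_⟩
    have hnorm : ∀ y,
        ∫ u in Ioi (0 : ℝ), ‖F y u‖ = |w y| * (n ! / (2 * (1 + q y) ^ (n + 1))) := by
      intro y
      rw [← integral_Ioi_pow_mul_exp_neg_mul_sq n (hpos y), ← integral_const_mul]
      refine setIntegral_congr_fun measurableSet_Ioi fun u hu => ?_
      simp only [F, norm_mul, Real.norm_eq_abs]
      rw [abs_of_pos (exp_pos _), abs_of_pos (a := u ^ (2 * n + 1)) (pow_pos hu _)]
    simp only [Function.uncurry_apply_pair, hnorm]
    refine ContinuousOn.integrableOn_compact hK (Continuous.continuousOn ?_)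
    have := fun y => (mul_pos two_pos (pow_pos (hpos y) (n + 1))).ne'
    fun_prop (disch := exact this _)
  have hfiber : ∀ u, ∫ y in K, F y u ∂μ =
      u ^ (2 * n + 1) * exp (-u ^ 2) * ∫ y in K, w y * exp (-(u ^ 2 * q y)) ∂μ := by
    intro u
    rw [← integral_const_mul]
    congr 1 with y
    simp only [F]
    rw [show -((1 + q y) * u ^ 2) = -u ^ 2 + -(u ^ 2 * q y) by ring, exp_add]
    ring
  calc ∫ y in K, w y / (1 + q y) ^ (n + 1) ∂μ
      = ∫ y in K, 2 / n ! * (∫ u in Ioi (0 : ℝ), F y u) ∂μ := by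
        congr 1 with y
        rw [hslice]
        field_simp
    _ = 2 / n ! * ∫ u in Ioi (0 : ℝ), ∫ y in K, F y u ∂μ := by
        rw [integral_const_mul, integral_integral_swap hF]
    _ = _ := by simp only [hfiber]

theorem setIntegral_Icc_prod_pow_mul_exp_neg_mul_sum_sq {ι : Type*} [Fintype ι] {k : ι → ℕ}
    (hk : ∀ i, Even (k i)) {u : ℝ} (hu : 0 < u) :
    ∫ y in Icc (fun _ : ι => (-1 : ℝ)) (fun _ => 1),
        (∏ i, y i ^ k i) * exp (-(u ^ 2 * ∑ i, y i ^ 2)) =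
      ∏ i, 2 * partialGaussMoment (k i) u / u ^ (k i + 1) := by
  have hsplit : ∀ y : ι → ℝ, (∏ i, y i ^ k i) * exp (-(u ^ 2 * ∑ i, y i ^ 2)) =
      ∏ i, y i ^ k i * exp (-(u ^ 2 * y i ^ 2)) := by
    intro y
    rw [Finset.mul_sum, ← Finset.sum_neg_distrib, exp_sum, Finset.prod_mul_distrib]
  simp_rw [hsplit]
  rw [setIntegral_Icc_prod_eq_prod _ _ fun i x => x ^ k i * exp (-(u ^ 2 * x ^ 2))]
  exact Finset.prod_congr rfl fun i _ => integral_Icc_pow_mul_exp_neg_mul_sq (hk i) hu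

theorem setIntegral_one_add_three_mul_pow_four_mul_exp_neg {u : ℝ} (hu : 0 < u) :
    ∫ y in Icc (fun _ : Fin 3 => (-1 : ℝ)) (fun _ => 1),
        (1 + 3 * y 0 ^ 4) * exp (-(u ^ 2 * ∑ i, y i ^ 2)) =
      8 * partialGaussMoment 0 u ^ 3 / u ^ 3 +
        24 * partialGaussMoment 4 u * partialGaussMoment 0 u ^ 2 / u ^ 7 := by
  have hweight : ∀ y : Fin 3 → ℝ, (1 + 3 * y 0 ^ 4) * exp (-(u ^ 2 * ∑ i, y i ^ 2)) =
      (∏ i, y i ^ (0 : ℕ)) * exp (-(u ^ 2 * ∑ i, y i ^ 2)) +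
        3 * ((∏ i, y i ^ (![4, 0, 0] i)) * exp (-(u ^ 2 * ∑ i, y i ^ 2))) := by
    intro y
    simp only [pow_zero, Finset.prod_const_one, one_mul, Fin.prod_univ_three,
      Matrix.cons_val_zero, Matrix.cons_val_one, Matrix.cons_val, mul_one]
    ring
  have hint : ∀ k : Fin 3 → ℕ, IntegrableOn
      (fun y : Fin 3 → ℝ => (∏ i, y i ^ k i) * exp (-(u ^ 2 * ∑ i, y i ^ 2)))
      (Icc (fun _ => -1) (fun _ => 1)) :=
    fun k => Continuous.integrableOn_Icc (by fun_prop)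
  simp_rw [hweight]
  rw [integral_add (hint _) ((hint _).const_mul 3), integral_const_mul,
    setIntegral_Icc_prod_pow_mul_exp_neg_mul_sum_sq (k := fun _ => 0) (fun _ => .zero) hu,
    setIntegral_Icc_prod_pow_mul_exp_neg_mul_sum_sq (k := ![4, 0, 0]) (by decide) hu]
  simp only [zero_add, pow_one, Finset.prod_div_distrib, Finset.prod_const, Finset.card_univ,
    Fintype.card_fin, Fin.prod_univ_three, Matrix.cons_val_zero, Matrix.cons_val_one,
    Matrix.cons_val]
  field_simp
  ring

theorem tendsto_pow_mul_exp_neg_sq_atTop (k : ℕ) :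
    Tendsto (fun u : ℝ => u ^ k * exp (-u ^ 2)) atTop (𝓝 0) := by
  have h := (rpow_mul_exp_neg_mul_sq_isLittleO_exp_neg one_pos (k : ℝ)).trans_tendsto
    (tendsto_exp_atBot.comp (tendsto_id.const_mul_atTop_of_neg (by norm_num)))
  refine h.congr' ?_
  filter_upwards [eventually_ge_atTop 0] with u hu
  simp [rpow_natCast]

def radialPrimitive (u : ℝ) : ℝ :=
  2 * partialGaussMoment 0 u ^ 4 -
    (4 / 3 * u ^ 3 + 2 * u) * exp (-u ^ 2) * partialGaussMoment 0 u ^ 3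

theorem hasDerivAt_radialPrimitive (u : ℝ) :
    HasDerivAt radialPrimitive
      ((8 / 3 * u ^ 4 * partialGaussMoment 0 u ^ 3 +
        8 * partialGaussMoment 4 u * partialGaussMoment 0 u ^ 2) * exp (-u ^ 2)) u := by
  have hE := hasDerivAt_partialGaussMoment 0 u
  have hexp : HasDerivAt (fun s : ℝ => exp (-s ^ 2)) (exp (-u ^ 2) * -(2 * u)) u := by
    simpa using ((hasDerivAt_pow 2 u).neg).exp
  have hpoly : HasDerivAt (fun s : ℝ => 4 / 3 * s ^ 3 + 2 * s) (4 * u ^ 2 + 2) u :=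
    (((hasDerivAt_pow 3 u).const_mul (4 / 3)).fun_add
      ((hasDerivAt_id u).const_mul 2)).congr_deriv (by norm_num; ring)
  refine (((hE.fun_pow 4).const_mul 2).fun_sub
    ((hpoly.fun_mul hexp).fun_mul (hE.fun_pow 3))).congr_deriv ?_
  rw [partialGaussMoment_four]
  norm_num
  ring

theorem tendsto_radialPrimitive_atTop : Tendsto radialPrimitive atTop (𝓝 (π ^ 2 / 8)) := by
  have hE := tendsto_partialGaussMoment_zero
  have hdecay : Tendsto (fun u : ℝ => (4 / 3 * u ^ 3 + 2 * u) * exp (-u ^ 2)) atTop (𝓝 0) := by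
    simpa [add_mul, mul_assoc] using
      ((tendsto_pow_mul_exp_neg_sq_atTop 3).const_mul (4 / 3)).add
        ((tendsto_pow_mul_exp_neg_sq_atTop 1).const_mul 2)
  have hlim : 2 * (√π / 2) ^ 4 - 0 * (√π / 2) ^ 3 = π ^ 2 / 8 := by
    rw [div_pow, show 4 = 2 * 2 from rfl, pow_mul, sq_sqrt pi_nonneg]
    ring
  rw [← hlim]
  exact ((hE.pow 4).const_mul 2).sub (hdecay.mul (hE.pow 3))

theorem integral_Ioi_deriv_radialPrimitive :
    ∫ u in Ioi (0 : ℝ), (8 / 3 * u ^ 4 * partialGaussMoment 0 u ^ 3 +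
        8 * partialGaussMoment 4 u * partialGaussMoment 0 u ^ 2) * exp (-u ^ 2) = π ^ 2 / 8 := by
  rw [integral_Ioi_of_hasDerivAt_of_nonneg' (fun u _ => hasDerivAt_radialPrimitive u)
    (fun u hu => ?_) tendsto_radialPrimitive_atTop]
  · simp [radialPrimitive]
  · have := partialGaussMoment_nonneg (by decide : Even 0) (le_of_lt hu)
    have := partialGaussMoment_nonneg (by decide : Even 4) (le_of_lt hu)
    positivity

theorem setIntegral_one_add_three_mul_pow_four_div :
    ∫ y in Icc (fun _ : Fin 3 => (-1 : ℝ)) (fun _ => 1),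
      (1 + 3 * y 0 ^ 4) / (1 + ∑ i, y i ^ 2) ^ 4 = π ^ 2 / 8 := by
  rw [setIntegral_div_one_add_pow_eq isCompact_Icc (by fun_prop) (by fun_prop)
    (fun y => Finset.sum_nonneg fun i _ => sq_nonneg (y i)) 3,
    ← integral_Ioi_deriv_radialPrimitive, ← integral_const_mul]
  refine setIntegral_congr_fun measurableSet_Ioi fun u hu => ?_
  rw [setIntegral_one_add_three_mul_pow_four_mul_exp_neg hu]
  have : u ≠ 0 := ne_of_gt hu
  simp only [Nat.factorial]
  field_simp
  ring

theorem three_mul_sigma1_add_sigma4 :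
    3 * sigma1 + sigma4 = ∫ y in Icc (fun _ : Fin 3 => (-1 : ℝ)) (fun _ => 1),
      (1 + 3 * y 0 ^ 4) / (1 + ∑ i, y i ^ 2) ^ 4 := by
  have hden : ∀ y : Fin 3 → ℝ, (1 + ∑ i, y i ^ 2) ^ 4 ≠ 0 := fun y => by positivity
  have hint : ∀ k : ℕ, IntegrableOn (fun y : Fin 3 → ℝ => y 0 ^ k / (1 + ∑ i, y i ^ 2) ^ 4)
      (Icc (fun _ => -1) (fun _ => 1)) :=
    fun k => Continuous.integrableOn_Icc (by fun_prop (disch := exact hden _))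
  rw [sigma1, sigma4, ← integral_const_mul, ← integral_add ((hint 4).const_mul 3)
    (by simpa [IntegrableOn] using hint 0)]
  congr 1 with y
  ring

/-- `8(3σ₁ + σ₄) = π²`; equivalently `∫_{[−1,1]³} (1+3y₁⁴)/(1+|y|²)⁴ dy = π²/8`. -/
theorem sigma_one_four_eq :
    8 * (3 * sigma1 + sigma4) = Real.pi ^ 2 ∧
    (∫ y in Set.Icc (fun _ : Fin 3 => (-1 : ℝ)) (fun _ => 1),
        (1 + 3 * (y 0) ^ 4) / (1 + ∑ i, (y i) ^ 2) ^ 4) = Real.pi ^ 2 / 8 := by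
  refine ⟨?_, setIntegral_one_add_three_mul_pow_four_div⟩
  rw [three_mul_sigma1_add_sigma4, setIntegral_one_add_three_mul_pow_four_div]
  ring
end
end

section
/- With σ₁, σ₂, σ₃, σ₄ the explicit integrals defined below, one has 3σ₁ − 6σ₂ − 6σ₃ + σ₄ = 0. -/
open scoped BigOperators
open MeasureTheory

noncomputable section

/-! Write `D = 1 + |y|²` and `φ(y) = y₁(1 - y₁²)/D³`. A direct computation gives
`∂₁φ = (3y₁⁴ - 3y₁²y₂² - 3y₁²y₃² - 8y₁² + y₂² + y₃² + 1)/D⁴`, and since `φ` vanishes on the faces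
`y₁ = ±1` of the cube, the divergence theorem (applied to the field `φ e₁`) shows that `∂₁φ`
integrates to zero over the cube. Permutations of the coordinates preserve the cube and `D`, so the
integral of `∂₁φ` is `3σ₁ - 3σ₂ - 3σ₂ - 8σ₃ + σ₃ + σ₃ + σ₄ = 3σ₁ - 6σ₂ - 6σ₃ + σ₄`. -/

open Set Function

section Symmetry

variable {ι : Type*} [Fintype ι]

theorem setIntegral_Icc_comp_perm {E : Type*} [NormedAddCommGroup E] [NormedSpace ℝ E]
    (σ : Equiv.Perm ι) (a b : ℝ) (f : (ι → ℝ) → E) :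
    ∫ y in Icc (fun _ => a) (fun _ => b), f (y ∘ σ) =
      ∫ y in Icc (fun _ => a) (fun _ => b), f y := by
  let e := MeasurableEquiv.arrowCongr' σ.symm (MeasurableEquiv.refl ℝ)
  have he : MeasurePreserving e :=
    volume_preserving_arrowCongr' _ _ (MeasurePreserving.id volume)
  have hpre : e ⁻¹' Icc (fun _ => a) (fun _ => b) = Icc (fun _ => a) (fun _ => b) := by
    ext y
    simp only [mem_preimage, mem_Icc, Pi.le_def]
    exact (σ.forall_congr_right (q := fun i => a ≤ y i)).and
      (σ.forall_congr_right (q := fun i => y i ≤ b))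
  have := he.setIntegral_preimage_emb e.measurableEmbedding f (Icc (fun _ => a) (fun _ => b))
  rwa [hpre] at this

theorem setIntegral_Icc_comp_perm_div_one_add_sum_sq_pow (σ : Equiv.Perm ι) (a b : ℝ)
    (p : (ι → ℝ) → ℝ) (k : ℕ) :
    ∫ y in Icc (fun _ => a) (fun _ => b), p (y ∘ σ) / (1 + ∑ i, y i ^ 2) ^ k =
      ∫ y in Icc (fun _ => a) (fun _ => b), p y / (1 + ∑ i, y i ^ 2) ^ k := by
  refine (setIntegral_congr_fun measurableSet_Icc fun y _ => ?_).trans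
    (setIntegral_Icc_comp_perm σ a b fun y => p y / (1 + ∑ i, y i ^ 2) ^ k)
  simp only [comp_apply, Equiv.sum_comp σ fun i => y i ^ 2]

end Symmetry

theorem integral_fderiv_apply_single_eq_zero {n : ℕ} {E : Type*} [NormedAddCommGroup E]
    [NormedSpace ℝ E] {a b : Fin (n + 1) → ℝ} (hle : a ≤ b) (i : Fin (n + 1))
    {f : (Fin (n + 1) → ℝ) → E} {f' : (Fin (n + 1) → ℝ) → (Fin (n + 1) → ℝ) →L[ℝ] E}
    (hf : ContinuousOn f (Icc a b))
    (hf' : ∀ x ∈ univ.pi fun j => Ioo (a j) (b j), HasFDerivAt f (f' x) x)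
    (hint : IntegrableOn (fun x => f' x (Pi.single i 1)) (Icc a b))
    (ha : ∀ x ∈ Icc a b, x i = a i → f x = 0) (hb : ∀ x ∈ Icc a b, x i = b i → f x = 0) :
    ∫ x in Icc a b, f' x (Pi.single i 1) = 0 := by
  set F' : Fin (n + 1) → (Fin (n + 1) → ℝ) → (Fin (n + 1) → ℝ) →L[ℝ] E := Pi.single i f'
  have hdiv_eq : ∀ x, ∑ j, F' j x (Pi.single j 1) = f' x (Pi.single i 1) := fun x => by
    rw [Finset.sum_eq_single i (fun j _ hj => by simp [F', hj]) (by simp)]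
    simp [F']
  have hdiv := integral_divergence_of_hasFDerivAt_off_countable' a b hle (Pi.single i f)
    F' ∅ countable_empty
    (fun j => by
      rcases eq_or_ne j i with rfl | hj
      · simpa using hf
      · simp only [Pi.single_eq_of_ne hj]; exact continuousOn_const)
    (fun x hx j => by
      rcases eq_or_ne j i with rfl | hj
      · simpa [F'] using hf' x hx.1
      · simp only [F', Pi.single_eq_of_ne hj]; exact hasFDerivAt_const (0 : E) x)
    (by simpa only [hdiv_eq] using hint)
  simp only [hdiv_eq] at hdiv
  rw [hdiv]
  refine Finset.sum_eq_zero fun j _ => ?_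
  rcases eq_or_ne j i with rfl | hj
  · have hface : ∀ c ∈ Icc (a j) (b j), ∀ y ∈ Icc (a ∘ j.succAbove) (b ∘ j.succAbove),
        j.insertNth c y ∈ Icc a b := fun c hc y hy => Fin.insertNth_mem_Icc.2 ⟨hc, hy⟩
    simp only [Pi.single_eq_same]
    rw [setIntegral_eq_zero_of_forall_eq_zero fun y hy =>
        hb _ (hface _ ⟨hle j, le_rfl⟩ y hy) (Fin.insertNth_apply_same _ _ _),
      setIntegral_eq_zero_of_forall_eq_zero fun y hy =>
        ha _ (hface _ ⟨le_rfl, hle j⟩ y hy) (Fin.insertNth_apply_same _ _ _), sub_self]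
  · simp [hj]

theorem HasFDerivAt.apply_single_eq {ι 𝕜 F : Type*} [Fintype ι] [DecidableEq ι]
    [NontriviallyNormedField 𝕜] [NormedAddCommGroup F] [NormedSpace 𝕜 F]
    {f : (ι → 𝕜) → F} {f' : (ι → 𝕜) →L[𝕜] F} {x : ι → 𝕜} {i : ι} {g' : F}
    (hf : HasFDerivAt f f' x) (hg : HasDerivAt (fun t => f (update x i t)) g' (x i)) :
    f' (Pi.single i 1) = g' := by
  have hf' : HasFDerivAt f f' (update x i (x i)) := by rwa [update_eq_self]
  exact (hf'.comp_hasDerivAt (x i) (hasDerivAt_update x i (x i))).unique hg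

local notation "cube" => Icc (fun _ : Fin 3 => (-1 : ℝ)) (fun _ => 1)

def cubeField (x : Fin 3 → ℝ) : ℝ :=
  x 0 * (1 - x 0 ^ 2) / (1 + ∑ i, x i ^ 2) ^ 3

theorem differentiable_cubeField : Differentiable ℝ cubeField := by
  unfold cubeField
  simp only [div_eq_mul_inv]
  fun_prop (disch := intro x; positivity)

theorem cubeField_eq_zero_of_sq_eq_one {x : Fin 3 → ℝ} (hx : x 0 ^ 2 = 1) : cubeField x = 0 := by
  simp [cubeField, hx]

theorem fderiv_cubeField_apply_single (x : Fin 3 → ℝ) :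
    fderiv ℝ cubeField x (Pi.single 0 1) =
      3 * (x 0 ^ 4 / (1 + ∑ i, x i ^ 2) ^ 4) - 3 * (x 0 ^ 2 * x 1 ^ 2 / (1 + ∑ i, x i ^ 2) ^ 4)
        - 3 * (x 0 ^ 2 * x 2 ^ 2 / (1 + ∑ i, x i ^ 2) ^ 4) - 8 * (x 0 ^ 2 / (1 + ∑ i, x i ^ 2) ^ 4)
        + x 1 ^ 2 / (1 + ∑ i, x i ^ 2) ^ 4 + x 2 ^ 2 / (1 + ∑ i, x i ^ 2) ^ 4
        + 1 / (1 + ∑ i, x i ^ 2) ^ 4 := by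
  refine (differentiable_cubeField x).hasFDerivAt.apply_single_eq ?_
  set c := x 1 ^ 2 + x 2 ^ 2 with hc
  have hline : (fun t => cubeField (update x 0 t)) =
      fun t => t * (1 - t ^ 2) / (1 + (t ^ 2 + c)) ^ 3 := by
    funext t
    simp [cubeField, Fin.sum_univ_three, c, add_assoc]
  have hsum : ∑ i, x i ^ 2 = x 0 ^ 2 + c := by simp [Fin.sum_univ_three, c, add_assoc]
  have hD : 1 + (x 0 ^ 2 + c) ≠ 0 := by positivity
  rw [hline, hsum]
  have hid := hasDerivAt_id' (x 0)
  refine ((hid.fun_mul ((hid.fun_pow 2).const_sub 1)).fun_div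
    ((((hid.fun_pow 2).add_const c).const_add 1).fun_pow 3) (pow_ne_zero 3 hD)).congr_deriv ?_
  rw [hc]
  field_simp
  ring

theorem integral_fderiv_cubeField_apply_single :
    ∫ x in cube, fderiv ℝ cubeField x (Pi.single 0 1) = 0 := by
  have hint : IntegrableOn (fun x => fderiv ℝ cubeField x (Pi.single 0 1)) cube := by
    simp only [fderiv_cubeField_apply_single]
    exact Continuous.integrableOn_Icc (by fun_prop (disch := intro x; positivity))
  exact integral_fderiv_apply_single_eq_zero (fun _ => by norm_num) 0
    differentiable_cubeField.continuous.continuousOn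
    (fun x _ => (differentiable_cubeField x).hasFDerivAt) hint
    (fun x _ hx => cubeField_eq_zero_of_sq_eq_one (by simp [hx]))
    (fun x _ hx => cubeField_eq_zero_of_sq_eq_one (by simp [hx]))

/-- `3σ₁ − 6σ₂ − 6σ₃ + σ₄ = 0`. -/
theorem sigma_alt_sum_eq : 3 * sigma1 - 6 * sigma2 - 6 * sigma3 + sigma4 = 0 := by
  have hσ₂ : ∫ y in cube, y 0 ^ 2 * y 2 ^ 2 / (1 + ∑ i, y i ^ 2) ^ 4 = sigma2 :=
    setIntegral_Icc_comp_perm_div_one_add_sum_sq_pow (Equiv.swap 1 2) _ _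
      (fun y => y 0 ^ 2 * y 1 ^ 2) 4
  have hσ₃ : ∫ y in cube, y 1 ^ 2 / (1 + ∑ i, y i ^ 2) ^ 4 = sigma3 :=
    setIntegral_Icc_comp_perm_div_one_add_sum_sq_pow (Equiv.swap 0 1) _ _ (fun y => y 0 ^ 2) 4
  have hσ₃' : ∫ y in cube, y 2 ^ 2 / (1 + ∑ i, y i ^ 2) ^ 4 = sigma3 :=
    setIntegral_Icc_comp_perm_div_one_add_sum_sq_pow (Equiv.swap 0 2) _ _ (fun y => y 0 ^ 2) 4
  have h := integral_fderiv_cubeField_apply_single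
  simp only [fderiv_cubeField_apply_single] at h
  rw [integral_add, integral_add, integral_add, integral_sub, integral_sub, integral_sub,
    integral_const_mul, integral_const_mul, integral_const_mul, integral_const_mul,
    hσ₂, hσ₃, hσ₃'] at h
  · rw [← h]
    unfold sigma1 sigma2 sigma3 sigma4
    ring
  all_goals exact Continuous.integrableOn_Icc (by fun_prop (disch := intro x; positivity))
end
end
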